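/- Fix an integer K ≥ 2, an index k : Fin K, and ᾱ ∈ [0,1); set σ̃ = √(1 − ᾱ²) and let μ_k = N(ᾱ e_k, σ̃² I_K). Then for every index i ≠ k, μ_k({w | ∀ j ≠ i, w j < w i}) = (1/(K−1)) · (1 − ∫_ℝ φ(z − ᾱ/σ̃) · Φ(z)^{K−1} dz). In particular this probability is the same for all i ≠ k. -/

import Mathlib

open MeasureTheory ProbabilityTheory

/-- The standard normal density `φ(z) = exp(-z²/2)/√(2π)`. -/
noncomputable def stdGaussianPDF (z : ℝ) : ℝ :=
  Real.exp (-z ^ 2 / 2) / Real.sqrt (2 * Real.pi)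

/-- The standard normal cumulative distribution function `Φ(z) = ∫_{-∞}^z φ(u) du`. -/
noncomputable def stdGaussianCDF (z : ℝ) : ℝ :=
  ∫ u in Set.Iic z, stdGaussianPDF u

open scoped ENNReal NNReal

/-!
The events "coordinate `i` is the strict maximum" are disjoint, and since the coordinates are
independent and atomless, ties have probability zero, so these `K` probabilities sum to one.
Swapping two coordinates `i, i' ≠ k` preserves `N(ᾱ e_k, σ̃² I)`, so all `i ≠ k` share one
probability `p`. Conditioning on the `k`-th coordinate `x ~ N(ᾱ, σ̃²)` gives the remaining one,
`∫ Φ(x/σ̃)^{K-1} dN(ᾱ, σ̃²)(x)`, which the substitution `z = x/σ̃` turns into `∫ φ(z - ᾱ/σ̃) Φ(z)^{K-1} dz`.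
Hence `(K - 1) p = 1 - ∫ φ(z - ᾱ/σ̃) Φ(z)^{K-1} dz`.
-/

def strictArgmaxSet {ι : Type*} (i : ι) : Set (ι → ℝ) := {w | ∀ j ≠ i, w j < w i}

section StrictArgmax

variable {ι : Type*}

theorem measurableSet_strictArgmaxSet [Countable ι] (i : ι) :
    MeasurableSet (strictArgmaxSet i) := by
  simp only [strictArgmaxSet, Set.ofPred_forall]
  exact .iInter fun j => .iInter fun _ =>
    measurableSet_lt (measurable_pi_apply j) (measurable_pi_apply i)

theorem pairwise_disjoint_strictArgmaxSet :
    Pairwise (Function.onFun Disjoint (strictArgmaxSet : ι → Set (ι → ℝ))) :=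
  fun a b hab => Set.disjoint_left.2 fun _ ha hb => (ha b hab.symm).asymm (hb a hab)

theorem compl_ties_subset_iUnion_strictArgmaxSet [Finite ι] [Nonempty ι] :
    (⋃ (a : ι) (b : ι) (_ : a ≠ b), {w : ι → ℝ | w a = w b})ᶜ ⊆ ⋃ i, strictArgmaxSet i := by
  intro w hw
  simp only [Set.mem_compl_iff, Set.mem_iUnion, Set.mem_ofPred_eq, not_exists] at hw
  obtain ⟨i, hi⟩ := Finite.exists_max w
  exact Set.mem_iUnion.2 ⟨i, fun j hj => (hi j).lt_of_ne (hw j i hj)⟩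

theorem pi_setOf_apply_eq_apply_eq_zero [Fintype ι] {a b : ι} {μ : ι → Measure ℝ}
    [∀ i, IsProbabilityMeasure (μ i)] [NullSingletonClass (μ b)] (hab : a ≠ b) :
    Measure.pi μ {w | w a = w b} = 0 := by
  have hindep : IndepFun (fun w : ι → ℝ => w a) (fun w => w b) (Measure.pi μ) :=
    (iIndepFun_pi (X := fun _ x => x) fun _ => aemeasurable_id).indepFun hab
  have hmap := hindep.map_prod_eq_prod_map_map (measurable_pi_apply a).aemeasurable
    (measurable_pi_apply b).aemeasurable
  rw [(measurePreserving_eval μ a).map_eq, (measurePreserving_eval μ b).map_eq] at hmap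
  have hdiag : MeasurableSet {p : ℝ × ℝ | p.1 = p.2} :=
    measurableSet_eq_fun measurable_fst measurable_snd
  calc Measure.pi μ {w | w a = w b}
      = (Measure.pi μ).map (fun w => (w a, w b)) {p : ℝ × ℝ | p.1 = p.2} := by
        rw [Measure.map_apply (by fun_prop) hdiag]; rfl
    _ = 0 := by
        rw [hmap, Measure.prod_apply hdiag]
        simp [Set.preimage]

theorem sum_measureReal_pi_strictArgmaxSet [Fintype ι] [Nonempty ι] (μ : ι → Measure ℝ)
    [∀ i, IsProbabilityMeasure (μ i)] [∀ i, NullSingletonClass (μ i)] :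
    ∑ i, (Measure.pi μ).real (strictArgmaxSet i) = 1 := by
  rw [← measureReal_iUnion_fintype pairwise_disjoint_strictArgmaxSet
    measurableSet_strictArgmaxSet, measureReal_def,
    (prob_compl_eq_zero_iff (.iUnion measurableSet_strictArgmaxSet)).1, ENNReal.toReal_one]
  refine measure_mono_null (Set.compl_subset_comm.1 compl_ties_subset_iUnion_strictArgmaxSet) ?_
  exact measure_iUnion_null fun a => measure_iUnion_null fun b =>
    measure_iUnion_null fun hab => pi_setOf_apply_eq_apply_eq_zero hab

theorem pi_strictArgmaxSet_perm [Fintype ι] (μ : ι → Measure ℝ) [∀ i, SigmaFinite (μ i)]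
    (e : Equiv.Perm ι) (he : ∀ j, μ (e j) = μ j) (i : ι) :
    Measure.pi μ (strictArgmaxSet (e i)) = Measure.pi μ (strictArgmaxSet i) := by
  have hmp := measurePreserving_piCongrLeft μ e
  simp only [he] at hmp
  rw [← hmp.measure_preimage (measurableSet_strictArgmaxSet _).nullMeasurableSet]
  congr 1
  ext w
  simp only [strictArgmaxSet, Set.mem_preimage, Set.mem_ofPred_eq, MeasurableEquiv.coe_piCongrLeft,
    Equiv.piCongrLeft_apply_apply]
  exact (e.forall_congr fun {j} => by simp [Equiv.piCongrLeft_apply_apply]).symm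

theorem pi_strictArgmaxSet_eq_of_eq [Fintype ι] [DecidableEq ι] (μ : ι → Measure ℝ)
    [∀ i, SigmaFinite (μ i)] {a b : ι} (hab : μ a = μ b) :
    Measure.pi μ (strictArgmaxSet a) = Measure.pi μ (strictArgmaxSet b) := by
  have he (j : ι) : μ (Equiv.swap a b j) = μ j := by
    rcases eq_or_ne j a with rfl | hja
    · simp [hab]
    rcases eq_or_ne j b with rfl | hjb
    · simp [hab]
    · rw [Equiv.swap_apply_of_ne_of_ne hja hjb]
  simpa using pi_strictArgmaxSet_perm μ (Equiv.swap a b) he b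

end StrictArgmax

theorem pi_strictArgmaxSet_eq_lintegral {n : ℕ} (μ : Fin (n + 1) → Measure ℝ)
    [∀ i, SigmaFinite (μ i)] (k : Fin (n + 1)) :
    Measure.pi μ (strictArgmaxSet k) = ∫⁻ x, ∏ j, μ (k.succAbove j) (Set.Iio x) ∂μ k := by
  set S : Set (ℝ × (Fin n → ℝ)) := {p | ∀ j, p.2 j < p.1}
  have hS : MeasurableSet S := by
    simp only [S, Set.ofPred_forall]
    exact .iInter fun j => measurableSet_lt measurable_snd.eval measurable_fst
  have hpre : strictArgmaxSet k = MeasurableEquiv.piFinSuccAbove (fun _ => ℝ) k ⁻¹' S := by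
    ext w
    simp [strictArgmaxSet, S, Fin.forall_iff_succAbove k, Fin.removeNth]
  rw [hpre, (measurePreserving_piFinSuccAbove μ k).measure_preimage hS.nullMeasurableSet,
    Measure.prod_apply hS]
  congr 1 with x
  have : Prod.mk x ⁻¹' S = Set.univ.pi fun _ => Set.Iio x := by ext; simp [S]
  rw [this, Measure.pi_pi]

theorem stdGaussianPDF_sub_eq_gaussianPDFReal (m z : ℝ) :
    stdGaussianPDF (z - m) = gaussianPDFReal m 1 z := by
  simp [stdGaussianPDF, gaussianPDFReal, div_eq_inv_mul]

theorem stdGaussianPDF_eq_gaussianPDFReal : stdGaussianPDF = gaussianPDFReal 0 1 :=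
  funext fun z => by simpa using stdGaussianPDF_sub_eq_gaussianPDFReal 0 z

theorem gaussianReal_Iic_eq_stdGaussianCDF (z : ℝ) :
    gaussianReal 0 1 (Set.Iic z) = ENNReal.ofReal (stdGaussianCDF z) := by
  rw [gaussianReal_apply_eq_integral 0 one_ne_zero, stdGaussianCDF,
    stdGaussianPDF_eq_gaussianPDFReal]

theorem stdGaussianCDF_eq_cdf : stdGaussianCDF = cdf (gaussianReal 0 1) := by
  ext z
  rw [cdf_eq_real, measureReal_def, gaussianReal_Iic_eq_stdGaussianCDF, ENNReal.toReal_ofReal]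
  rw [stdGaussianCDF, stdGaussianPDF_eq_gaussianPDFReal]
  exact setIntegral_nonneg measurableSet_Iic fun u _ => gaussianPDFReal_nonneg 0 1 u

theorem gaussianReal_map_div_sqrt (m : ℝ) {v : ℝ≥0} (hv : v ≠ 0) :
    (gaussianReal m v).map (· / √(v : ℝ)) = gaussianReal (m / √(v : ℝ)) 1 := by
  rw [gaussianReal_map_div_const]
  congr
  ext
  simp [hv]

theorem gaussianReal_zero_Iio {v : ℝ≥0} (hv : v ≠ 0) (x : ℝ) :
    gaussianReal 0 v (Set.Iio x) = ENNReal.ofReal (stdGaussianCDF (x / √(v : ℝ))) := by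
  have hσ : 0 < √(v : ℝ) := Real.sqrt_pos.2 (NNReal.coe_pos.2 (pos_iff_ne_zero.2 hv))
  have := nullSingletonClass_gaussianReal (μ := 0) (one_ne_zero : (1 : ℝ≥0) ≠ 0)
  have hpre : (· / √(v : ℝ)) ⁻¹' Set.Iio (x / √(v : ℝ)) = Set.Iio x := by
    ext; simp [div_lt_div_iff_of_pos_right hσ]
  rw [← hpre, ← Measure.map_apply (by fun_prop) measurableSet_Iio, gaussianReal_map_div_sqrt 0 hv,
    zero_div, measure_congr Iio_ae_eq_Iic, gaussianReal_Iic_eq_stdGaussianCDF]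

theorem lintegral_gaussianReal_stdGaussianCDF_pow (m : ℝ) {v : ℝ≥0} (hv : v ≠ 0) (n : ℕ) :
    ∫⁻ x, ENNReal.ofReal (stdGaussianCDF (x / √(v : ℝ)) ^ n) ∂gaussianReal m v
      = ENNReal.ofReal (∫ z, stdGaussianPDF (z - m / √(v : ℝ)) * stdGaussianCDF z ^ n) := by
  have hΦ : Measurable fun z => stdGaussianCDF z ^ n := by
    rw [stdGaussianCDF_eq_cdf]; exact (monotone_cdf _).measurable.pow_const n
  have hΦ_nonneg (z : ℝ) : 0 ≤ stdGaussianCDF z ^ n := by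
    rw [stdGaussianCDF_eq_cdf]; exact pow_nonneg (cdf_nonneg _ z) n
  have hΦ_int : Integrable (fun z => stdGaussianCDF z ^ n) (gaussianReal (m / √(v : ℝ)) 1) := by
    refine .of_bound hΦ.aestronglyMeasurable 1 (ae_of_all _ fun z => ?_)
    rw [Real.norm_of_nonneg (hΦ_nonneg z), stdGaussianCDF_eq_cdf]
    exact pow_le_one₀ (cdf_nonneg _ z) (cdf_le_one _ z)
  rw [← lintegral_map hΦ.ennreal_ofReal (by fun_prop), gaussianReal_map_div_sqrt m hv,
    ← ofReal_integral_eq_lintegral_ofReal hΦ_int (ae_of_all _ hΦ_nonneg),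
    integral_gaussianReal_eq_integral_smul one_ne_zero]
  simp_rw [stdGaussianPDF_sub_eq_gaussianPDFReal, smul_eq_mul]

theorem measureReal_pi_gaussianReal_strictArgmaxSet_self {n : ℕ} (k : Fin (n + 1)) (α : ℝ)
    {v : ℝ≥0} (hv : v ≠ 0) :
    (Measure.pi fun j => gaussianReal (if j = k then α else 0) v).real (strictArgmaxSet k)
      = ∫ z, stdGaussianPDF (z - α / √(v : ℝ)) * stdGaussianCDF z ^ n := by
  have hΦ (z : ℝ) : 0 ≤ stdGaussianCDF z := by rw [stdGaussianCDF_eq_cdf]; exact cdf_nonneg _ z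
  rw [measureReal_def, pi_strictArgmaxSet_eq_lintegral]
  simp only [Fin.succAbove_ne, if_false, if_true, gaussianReal_zero_Iio hv, Finset.prod_const,
    Finset.card_univ, Fintype.card_fin, ← ENNReal.ofReal_pow (hΦ _)]
  rw [lintegral_gaussianReal_stdGaussianCDF_pow α hv, ENNReal.toReal_ofReal]
  refine integral_nonneg fun z => mul_nonneg ?_ (pow_nonneg (hΦ z) n)
  rw [stdGaussianPDF_sub_eq_gaussianPDFReal]
  exact gaussianPDFReal_nonneg _ _ z

theorem gaussian_argmax_at_other_index_general (K : ℕ) (k : Fin K)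
    (α : ℝ) (hα0 : 0 ≤ α) (hα1 : α < 1) (i : Fin K) (hik : i ≠ k) :
    (Measure.pi fun j : Fin K =>
        gaussianReal (if j = k then α else 0) (Real.toNNReal (1 - α ^ 2)))
        {w | ∀ j ≠ i, w j < w i}
      = ENNReal.ofReal
          ((1 / ((K : ℝ) - 1)) *
            (1 - ∫ z : ℝ, stdGaussianPDF (z - α / Real.sqrt (1 - α ^ 2))
                * stdGaussianCDF z ^ (K - 1))) := by
  obtain ⟨n, rfl⟩ : ∃ n, K = n + 1 := Nat.exists_eq_add_one.2 i.pos
  have hα : 0 < 1 - α ^ 2 := by nlinarith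
  have hv : (1 - α ^ 2).toNNReal ≠ 0 := by simpa using hα
  have := fun j => nullSingletonClass_gaussianReal (μ := j) hv
  set μ := Measure.pi fun j : Fin (n + 1) =>
    gaussianReal (if j = k then α else 0) (1 - α ^ 2).toNNReal
  have hsum : ∑ j, μ.real (strictArgmaxSet j) = 1 := sum_measureReal_pi_strictArgmaxSet _
  have hself := measureReal_pi_gaussianReal_strictArgmaxSet_self k α hv
  rw [Real.coe_toNNReal _ hα.le] at hself
  have hother (j : Fin (n + 1)) (hj : j ∈ Finset.univ.erase k) :
      μ.real (strictArgmaxSet j) = μ.real (strictArgmaxSet i) := by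
    simp only [measureReal_def]
    rw [pi_strictArgmaxSet_eq_of_eq _ (a := j) (b := i)
      (by simp [Finset.ne_of_mem_erase hj, hik])]
  rw [← Finset.add_sum_erase _ _ (Finset.mem_univ k), Finset.sum_congr rfl hother,
    Finset.sum_const, Finset.card_erase_of_mem (Finset.mem_univ k), Finset.card_univ,
    Fintype.card_fin, Nat.add_sub_cancel, nsmul_eq_mul, hself] at hsum
  have hn : (n : ℝ) ≠ 0 := Nat.cast_ne_zero.2 fun hn => hik (Fin.ext (by omega))
  change μ (strictArgmaxSet i) = _
  rw [← ofReal_measureReal, Nat.add_sub_cancel, Nat.cast_add, Nat.cast_one, add_sub_cancel_right,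
    one_div_mul_eq_div]
  congr 1
  rw [eq_div_iff hn]
  linarith

/-- For `K ≥ 2`, `k : Fin K`, `ᾱ ∈ [0,1)`, `σ̃ = √(1-ᾱ²)` and any index `i ≠ k`, the
product Gaussian `N(ᾱ e_k, σ̃² I_K)` gives the event that coordinate `i` is the strict
maximum the probability `(1/(K-1)) (1 - ∫_ℝ φ(z - ᾱ/σ̃) Φ(z)^{K-1} dz)`; in particular
this probability is the same for all `i ≠ k`. -/
theorem gaussian_argmax_at_other_index (K : ℕ) (hK : 2 ≤ K) (k : Fin K)
    (α : ℝ) (hα0 : 0 ≤ α) (hα1 : α < 1) (i : Fin K) (hik : i ≠ k) :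
    (Measure.pi fun j : Fin K =>
        gaussianReal (if j = k then α else 0) (Real.toNNReal (1 - α ^ 2)))
        {w | ∀ j ≠ i, w j < w i}
      = ENNReal.ofReal
          ((1 / ((K : ℝ) - 1)) *
            (1 - ∫ z : ℝ, stdGaussianPDF (z - α / Real.sqrt (1 - α ^ 2))
                * stdGaussianCDF z ^ (K - 1))) :=
  gaussian_argmax_at_other_index_general K k α hα0 hα1 i hik
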